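/- arXiv:2110.03620 — 4 statements merged into one kernel-verified Lean document; each statement's English description precedes it below -/
import Mathlib

section
/- Fix ε > 0 and k ∈ ℕ. Let Q = (1/(1+e^ε), e^ε/(1+e^ε)) and Q' = (e^ε/(1+e^ε), 1/(1+e^ε)) be distributions on the two-element ordered set {1,2} (so D_∞(Q‖Q') = D_∞(Q'‖Q) = ε), and let A and A' be the distributions of the maximum of k i.i.d. samples from Q and Q' respectively, where the maximum prefers outcome 2 in probability terms (A = (1−p^k, p^k) with p = e^ε/(1+e^ε), A' = (1−q^k, q^k) with q = 1/(1+e^ε)). Then D_∞(A‖A') ≥ k·ε, and for all λ > 1, D_λ(A‖A') ≥ k·ε − k·log(1+e^{−ε})/(λ−1). -/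
open scoped BigOperators
open Finset

/-- A probability distribution on a finite set, given by its probability mass function. -/
def IsProbDist {Y : Type*} [Fintype Y] (P : Y → ℝ) : Prop :=
  (∀ y, 0 ≤ P y) ∧ ∑ y, P y = 1

/-- A probability distribution on `ℕ ∪ {0}`, given by its probability mass function. -/
def IsProbDistNat (p : ℕ → ℝ) : Prop :=
  (∀ k, 0 ≤ p k) ∧ (∑' k, p k) = 1

/-- The Rényi divergence of order `lam ∈ (1, ∞)` between two distributions on a finite set:
`D_lam(P‖Q) = (lam-1)⁻¹ log (∑_y P(y)^lam Q(y)^(1-lam))`. -/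
noncomputable def renyiDiv {Y : Type*} [Fintype Y] (lam : ℝ) (P Q : Y → ℝ) : ℝ :=
  (lam - 1)⁻¹ * Real.log (∑ y, P y ^ lam * Q y ^ (1 - lam))

/-- The max divergence `D_∞(P‖Q) = sup { log (P(S)/Q(S)) : S ⊆ Y, P(S) > 0 }`. -/
noncomputable def maxDiv {Y : Type*} [Fintype Y] (P Q : Y → ℝ) : ℝ :=
  sSup {x : ℝ | ∃ S : Finset Y,
    0 < ∑ y ∈ S, P y ∧ x = Real.log ((∑ y ∈ S, P y) / (∑ y ∈ S, Q y))}

/-- `Q(≤ y)`, the probability of the lower set `{z : z ≤ y}`. -/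
noncomputable def cdfLE {Y : Type*} [Fintype Y] [LinearOrder Y] (Q : Y → ℝ) (y : Y) : ℝ :=
  ∑ z ∈ Finset.univ.filter (fun z => z ≤ y), Q z

/-- `Q(< y)`, the probability of the strict lower set `{z : z < y}`. -/
noncomputable def cdfLT {Y : Type*} [Fintype Y] [LinearOrder Y] (Q : Y → ℝ) (y : Y) : ℝ :=
  ∑ z ∈ Finset.univ.filter (fun z => z < y), Q z

/-- The probability generating function `f(x) = E[x^K] = ∑_k P[K=k] x^k`. -/
noncomputable def pgf (p : ℕ → ℝ) (x : ℝ) : ℝ := ∑' k, p k * x ^ k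

/-- The derivative of the probability generating function, `f'(x) = E[K x^(K-1)]`. -/
noncomputable def pgfDeriv (p : ℕ → ℝ) (x : ℝ) : ℝ := ∑' k : ℕ, (k : ℝ) * p k * x ^ (k - 1)

/-- The distribution of the best (maximum) of `K` i.i.d. samples from `Q`, where the number of
samples `K` is drawn first according to the pmf `p`; if `K = 0` the fixed output `y₀` is
returned.  Indeed `P[best ≤ y] = f(Q(≤ y))` for `K ≥ 1`, so the mass at `y` is
`f(Q(≤ y)) - f(Q(< y))`, plus the mass `P[K = 0]` at the default output `y₀`. -/
noncomputable def bestDist {Y : Type*} [Fintype Y] [LinearOrder Y]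
    (p : ℕ → ℝ) (Q : Y → ℝ) (y₀ : Y) : Y → ℝ :=
  fun y => (pgf p (cdfLE Q y) - pgf p (cdfLT Q y)) + p 0 * (if y = y₀ then 1 else 0)

/-!
Both bounds come from the single outcome `2` (index `1 : Fin 2`), where `A` and `A'` put masses
`p^k` and `q^k`. Since `p / q = e^ε`, the likelihood ratio there is `e^{kε}`, which gives the
max-divergence bound directly; for the Rényi divergence, keeping only that term of the sum gives
`D_λ(A‖A') ≥ log (p^k / q^k) + log (p^k) / (λ - 1)`, and `p = 1 / (1 + e^{-ε})`.
-/

open Real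

section Divergences

variable {Y : Type*} [Fintype Y] (P Q : Y → ℝ)

theorem log_div_le_maxDiv (S : Finset Y) (hS : 0 < ∑ y ∈ S, P y) :
    log ((∑ y ∈ S, P y) / ∑ y ∈ S, Q y) ≤ maxDiv P Q := by
  have hfin : {x : ℝ | ∃ S : Finset Y,
      0 < ∑ y ∈ S, P y ∧ x = log ((∑ y ∈ S, P y) / ∑ y ∈ S, Q y)}.Finite :=
    (Set.finite_range fun S : Finset Y => log ((∑ y ∈ S, P y) / ∑ y ∈ S, Q y)).subset
      fun _ ⟨S, _, hx⟩ => ⟨S, hx.symm⟩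
  exact le_csSup hfin.bddAbove ⟨S, hS, rfl⟩

theorem log_div_add_log_div_le_renyiDiv {lam : ℝ} (hlam : 1 < lam)
    (hP : ∀ y, 0 ≤ P y) (hQ : ∀ y, 0 ≤ Q y) {y : Y} (hPy : 0 < P y) (hQy : 0 < Q y) :
    log (P y / Q y) + log (P y) / (lam - 1) ≤ renyiDiv lam P Q := by
  have hlam' : 0 < lam - 1 := by linarith
  have hterm : 0 < P y ^ lam * Q y ^ (1 - lam) := by positivity
  have hle : P y ^ lam * Q y ^ (1 - lam) ≤ ∑ z, P z ^ lam * Q z ^ (1 - lam) :=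
    Finset.single_le_sum (fun z _ => mul_nonneg (rpow_nonneg (hP z) _) (rpow_nonneg (hQ z) _))
      (Finset.mem_univ y)
  have hlog : log (P y ^ lam * Q y ^ (1 - lam)) = lam * log (P y) + (1 - lam) * log (Q y) := by
    rw [log_mul (rpow_pos_of_pos hPy _).ne' (rpow_pos_of_pos hQy _).ne',
      log_rpow hPy, log_rpow hQy]
  calc log (P y / Q y) + log (P y) / (lam - 1)
      = (lam - 1)⁻¹ * log (P y ^ lam * Q y ^ (1 - lam)) := by
        rw [hlog, log_div hPy.ne' hQy.ne']
        field_simp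
        ring
    _ ≤ renyiDiv lam P Q := by
        unfold renyiDiv
        gcongr

end Divergences

theorem log_exp_div_one_add_exp (ε : ℝ) :
    log (exp ε / (1 + exp ε)) = -log (1 + exp (-ε)) := by
  rw [← log_inv]
  congr 1
  field_simp
  rw [mul_add, ← exp_add]
  simp [add_comm]

theorem fixed_repetition_lower_bound_general (ε : ℝ) (k : ℕ) :
    (k : ℝ) * ε ≤
      maxDiv (![1 - (Real.exp ε / (1 + Real.exp ε)) ^ k, (Real.exp ε / (1 + Real.exp ε)) ^ k])
        (![1 - (1 / (1 + Real.exp ε)) ^ k, (1 / (1 + Real.exp ε)) ^ k]) ∧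
    ∀ lam : ℝ, 1 < lam →
      (k : ℝ) * ε - (k : ℝ) * Real.log (1 + Real.exp (-ε)) / (lam - 1) ≤
        renyiDiv lam
          (![1 - (Real.exp ε / (1 + Real.exp ε)) ^ k, (Real.exp ε / (1 + Real.exp ε)) ^ k])
          (![1 - (1 / (1 + Real.exp ε)) ^ k, (1 / (1 + Real.exp ε)) ^ k]) := by
  set p := exp ε / (1 + exp ε)
  set q := 1 / (1 + exp ε)
  have hp : 0 < p := by positivity
  have hq : 0 < q := by positivity
  have hp1 : p ≤ 1 := div_le_one_of_le₀ (by linarith) (by positivity)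
  have hq1 : q ≤ 1 := div_le_one_of_le₀ (by linarith [exp_pos ε]) (by positivity)
  have hratio : log (p ^ k / q ^ k) = k * ε := by
    rw [← div_pow, div_div_div_cancel_right₀ (by positivity), div_one, ← exp_nat_mul, log_exp]
  have hnonneg {r : ℝ} (hr : 0 ≤ r) (hr1 : r ≤ 1) : ∀ y, 0 ≤ ![1 - r ^ k, r ^ k] y :=
    Fin.forall_fin_two.2 ⟨by simpa using pow_le_one₀ hr hr1, by simpa using pow_nonneg hr k⟩
  constructor
  · simpa [hratio] using log_div_le_maxDiv ![1 - p ^ k, p ^ k] ![1 - q ^ k, q ^ k] {1}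
      (by simpa using pow_pos hp k)
  · intro lam hlam
    have hbound := log_div_add_log_div_le_renyiDiv ![1 - p ^ k, p ^ k] ![1 - q ^ k, q ^ k] hlam
      (hnonneg hp.le hp1) (hnonneg hq.le hq1) (y := 1) (by simpa using pow_pos hp k)
      (by simpa using pow_pos hq k)
    simp only [Matrix.cons_val_one, Matrix.cons_val_zero] at hbound
    rw [hratio, log_pow, log_exp_div_one_add_exp] at hbound
    rwa [mul_neg, neg_div, ← sub_eq_add_neg] at hbound

/-- Proposition 14, lower bound for a fixed number of repetitions:
for the randomized-response pair `Q = (1/(1+e^ε), e^ε/(1+e^ε))`,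
`Q' = (e^ε/(1+e^ε), 1/(1+e^ε))` on the ordered set `{1,2}`, the distributions of the
maximum of `k` i.i.d. samples are `A = (1-p^k, p^k)` with `p = e^ε/(1+e^ε)` and
`A' = (1-q^k, q^k)` with `q = 1/(1+e^ε)`, and they satisfy `D_∞(A‖A') ≥ k ε` and,
for all `lam > 1`, `D_lam(A‖A') ≥ k ε - k log(1+e^(-ε))/(lam-1)`. -/
theorem fixed_repetition_lower_bound (ε : ℝ) (hε : 0 < ε) (k : ℕ) (hk : 0 < k) :
    (k : ℝ) * ε ≤
      maxDiv (![1 - (Real.exp ε / (1 + Real.exp ε)) ^ k, (Real.exp ε / (1 + Real.exp ε)) ^ k])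
        (![1 - (1 / (1 + Real.exp ε)) ^ k, (1 / (1 + Real.exp ε)) ^ k]) ∧
    ∀ lam : ℝ, 1 < lam →
      (k : ℝ) * ε - (k : ℝ) * Real.log (1 + Real.exp (-ε)) / (lam - 1) ≤
        renyiDiv lam
          (![1 - (Real.exp ε / (1 + Real.exp ε)) ^ k, (Real.exp ε / (1 + Real.exp ε)) ^ k])
          (![1 - (1 / (1 + Real.exp ε)) ^ k, (1 / (1 + Real.exp ε)) ^ k]) :=
  fixed_repetition_lower_bound_general ε k
end

section
/- Let Y be a (finite) totally ordered set, δ₀ ∈ [0,1), and let Q, Q', Q₁, Q₂, Q₁', Q₂' be probability distributions on Y with Q = (1−δ₀)Q₁ + δ₀Q₂ and Q' = (1−δ₀)Q₁' + δ₀Q₂'. Let K be a random variable on ℕ∪{0} with probability generating function f, and define a random variable K' on ℕ∪{0} by P[K'=k] = P[K=k]·(1−δ₀)^k / f(1−δ₀). For a distribution P and a random count N, let A_P^N denote the distribution of the best of N i.i.d. samples from P (N drawn first; if N=0 a fixed arbitrary output, the same in all cases, is returned). Then for all λ ≥ 1, D_λ^{δ}(A_Q^K‖A_{Q'}^K) ≤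 D_λ(A_{Q₁}^{K'}‖A_{Q₁'}^{K'}), where δ = 1 − f(1−δ₀) and D_λ^{δ} denotes the δ-approximate Rényi divergence. -/
open scoped BigOperators
open Finset

lemma pow_incr_add {a a' h : ℝ} (ha' : 0 ≤ a') (haa : a' ≤ a) (hh : 0 ≤ h) (k : ℕ) :
    (a' + h) ^ k + a ^ k ≤ (a + h) ^ k + a' ^ k := by
  have ha : 0 ≤ a := ha'.trans haa
  rw [add_pow, add_pow, Finset.sum_range_succ, Finset.sum_range_succ]
  simp only [Nat.sub_self, pow_zero, mul_one, Nat.choose_self, Nat.cast_one]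
  have : ∑ j ∈ Finset.range k, a' ^ j * h ^ (k - j) * (k.choose j : ℝ)
       ≤ ∑ j ∈ Finset.range k, a ^ j * h ^ (k - j) * (k.choose j : ℝ) := by
    apply Finset.sum_le_sum
    intro j _
    gcongr
  linarith

lemma probnat_summable {p : ℕ → ℝ} (hp : IsProbDistNat p) : Summable p := by
  by_contra h
  have h2 := hp.2
  rw [tsum_eq_zero_of_not_summable h] at h2
  exact one_ne_zero h2.symm

lemma pgf_summable {p : ℕ → ℝ} (hp0 : ∀ k, 0 ≤ p k) (hs : Summable p) {x : ℝ}
    (hx0 : 0 ≤ x) (hx1 : x ≤ 1) : Summable (fun k => p k * x ^ k) := by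
  apply hs.of_nonneg_of_le (fun k => mul_nonneg (hp0 k) (pow_nonneg hx0 k))
  intro k
  calc p k * x ^ k ≤ p k * 1 := by
        have := pow_le_one₀ hx0 hx1 (n := k)
        nlinarith [hp0 k]
    _ = p k := mul_one _

lemma pgf_mono {p : ℕ → ℝ} (hp0 : ∀ k, 0 ≤ p k) (hs : Summable p) {x y : ℝ}
    (hx0 : 0 ≤ x) (hxy : x ≤ y) (hy1 : y ≤ 1) : pgf p x ≤ pgf p y := by
  apply Summable.tsum_le_tsum _ (pgf_summable hp0 hs hx0 (hxy.trans hy1))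
    (pgf_summable hp0 hs (hx0.trans hxy) hy1)
  intro k
  exact mul_le_mul_of_nonneg_left (pow_le_pow_left₀ hx0 hxy k) (hp0 k)

lemma pgf_incr {p : ℕ → ℝ} (hp0 : ∀ k, 0 ≤ p k) (hs : Summable p) {a a' h : ℝ}
    (ha' : 0 ≤ a') (haa : a' ≤ a) (hh : 0 ≤ h) (hub : a + h ≤ 1) :
    pgf p (a' + h) - pgf p a' ≤ pgf p (a + h) - pgf p a := by
  have ha : 0 ≤ a := ha'.trans haa
  rw [sub_le_sub_iff]
  unfold pgf
  rw [← Summable.tsum_add (pgf_summable hp0 hs (by linarith) (by linarith))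
        (pgf_summable hp0 hs ha (by linarith)),
      ← Summable.tsum_add (pgf_summable hp0 hs (by linarith) hub)
        (pgf_summable hp0 hs ha' (by linarith))]
  apply Summable.tsum_le_tsum _
    ((pgf_summable hp0 hs (by linarith) (by linarith)).add (pgf_summable hp0 hs ha (by linarith)))
    ((pgf_summable hp0 hs (by linarith) hub).add (pgf_summable hp0 hs ha' (by linarith)))
  intro k
  have h1 := pow_incr_add ha' haa hh k
  nlinarith [hp0 k]

lemma pgf_one {p : ℕ → ℝ} (hp : IsProbDistNat p) : pgf p 1 = 1 := by
  unfold pgf; simpa using hp.2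

lemma pgf_zero (p : ℕ → ℝ) : pgf p 0 = p 0 := by
  unfold pgf
  rw [tsum_eq_single 0 (fun k hk => by simp [zero_pow hk])]
  simp

lemma pgf_ratio (p : ℕ → ℝ) (c x : ℝ) :
    pgf (fun k => p k * c ^ k / pgf p c) x = pgf p (c * x) / pgf p c := by
  unfold pgf
  rw [div_eq_mul_inv, ← tsum_mul_right]
  exact tsum_congr fun k => by rw [mul_pow]; ring

lemma cdfLT_nonneg {Y : Type*} [Fintype Y] [LinearOrder Y] {Q : Y → ℝ}
    (hQ0 : ∀ y, 0 ≤ Q y) (y : Y) : 0 ≤ cdfLT Q y :=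
  Finset.sum_nonneg fun z _ => hQ0 z

lemma cdfLT_le_cdfLE {Y : Type*} [Fintype Y] [LinearOrder Y] {Q : Y → ℝ}
    (hQ0 : ∀ y, 0 ≤ Q y) (y : Y) : cdfLT Q y ≤ cdfLE Q y := by
  apply Finset.sum_le_sum_of_subset_of_nonneg
  · intro z hz
    simp only [Finset.mem_filter, Finset.mem_univ, true_and] at *
    exact le_of_lt hz
  · exact fun z _ _ => hQ0 z

lemma cdfLE_le_sum {Y : Type*} [Fintype Y] [LinearOrder Y] {Q : Y → ℝ}
    (hQ0 : ∀ y, 0 ≤ Q y) (y : Y) : cdfLE Q y ≤ ∑ z, Q z := by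
  apply Finset.sum_le_sum_of_subset_of_nonneg (Finset.filter_subset _ _)
  exact fun z _ _ => hQ0 z

lemma sum_g_cdf {Y : Type*} [Fintype Y] [LinearOrder Y] (Q : Y → ℝ) (g : ℝ → ℝ) :
    ∑ y, (g (cdfLE Q y) - g (cdfLT Q y)) = g (∑ y, Q y) - g 0 := by
  classical
  set n := Fintype.card Y with hn
  set e := Fintype.orderIsoFinOfCardEq Y rfl with he
  set S : ℕ → ℝ := fun i => ∑ j ∈ Finset.univ.filter (fun j : Fin n => (j : ℕ) < i), Q (e j)
    with hS
  have hLT : ∀ i : Fin n, cdfLT Q (e i) = S i.val := by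
    intro i
    unfold cdfLT
    simp only [hS]
    refine Finset.sum_equiv e.symm.toEquiv ?_ ?_
    · intro z
      simp only [Finset.mem_filter, Finset.mem_univ, true_and]
      constructor
      · intro hz
        exact (show e.symm z < i by simpa using e.symm.lt_iff_lt.mpr hz)
      · intro hz
        simpa using e.lt_iff_lt.mpr (show e.symm z < i from hz)
    · intro z _
      simp
  have hLE : ∀ i : Fin n, cdfLE Q (e i) = S (i.val + 1) := by
    intro i
    unfold cdfLE
    simp only [hS]
    refine Finset.sum_equiv e.symm.toEquiv ?_ ?_
    · intro z
      simp only [Finset.mem_filter, Finset.mem_univ, true_and, Nat.lt_succ_iff]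
      constructor
      · intro hz
        exact (show e.symm z ≤ i by simpa using e.symm.le_iff_le.mpr hz)
      · intro hz
        simpa using e.le_iff_le.mpr (show e.symm z ≤ i from hz)
    · intro z _
      simp
  have hmain : ∑ y, (g (cdfLE Q y) - g (cdfLT Q y))
      = ∑ i : Fin n, (g (S (i.val + 1)) - g (S i.val)) := by
    rw [← Equiv.sum_comp e.toEquiv (fun y => g (cdfLE Q y) - g (cdfLT Q y))]
    refine Finset.sum_congr rfl fun i _ => ?_
    show g (cdfLE Q (e i)) - g (cdfLT Q (e i)) = _
    rw [hLT i, hLE i]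
  rw [hmain]
  rw [Fin.sum_univ_eq_sum_range (fun i => g (S (i + 1)) - g (S i)) n]
  rw [Finset.sum_range_sub (fun i => g (S i))]
  have hSn : S n = ∑ y, Q y := by
    simp only [hS]
    rw [Finset.filter_true_of_mem (fun j _ => j.isLt)]
    simpa using Equiv.sum_comp e.toEquiv Q
  have hS0 : S 0 = 0 := by
    simp [hS]
  rw [hSn, hS0]

lemma cdf_mix {Y : Type*} [Fintype Y] [LinearOrder Y] {Q Q₁ Q₂ : Y → ℝ} {a b : ℝ}
    (hmix : ∀ y, Q y = a * Q₁ y + b * Q₂ y) (y : Y) :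
    cdfLE Q y = a * cdfLE Q₁ y + b * cdfLE Q₂ y ∧
    cdfLT Q y = a * cdfLT Q₁ y + b * cdfLT Q₂ y := by
  unfold cdfLE cdfLT
  constructor <;>
    rw [Finset.mul_sum, Finset.mul_sum, ← Finset.sum_add_distrib] <;>
    exact Finset.sum_congr rfl fun z _ => hmix z

lemma bestDist_nonneg {Y : Type*} [Fintype Y] [LinearOrder Y] {p : ℕ → ℝ}
    (hp : IsProbDistNat p) {Q : Y → ℝ} (hQ : IsProbDist Q) (y₀ y : Y) :
    0 ≤ bestDist p Q y₀ y := by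
  have hm := pgf_mono hp.1 (probnat_summable hp) (cdfLT_nonneg hQ.1 y)
    (cdfLT_le_cdfLE hQ.1 y) (by rw [← hQ.2]; exact cdfLE_le_sum hQ.1 y)
  have : (0:ℝ) ≤ p 0 * (if y = y₀ then 1 else 0) := by
    apply mul_nonneg (hp.1 0); split <;> norm_num
  unfold bestDist
  linarith

lemma bestDist_sum {Y : Type*} [Fintype Y] [LinearOrder Y] {p : ℕ → ℝ}
    (hp : IsProbDistNat p) {Q : Y → ℝ} (hQ : IsProbDist Q) (y₀ : Y) :
    ∑ y, bestDist p Q y₀ y = 1 := by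
  unfold bestDist
  rw [Finset.sum_add_distrib, sum_g_cdf Q (pgf p), hQ.2, pgf_one hp, pgf_zero,
    ← Finset.mul_sum]
  simp

lemma bestDist_isProbDist {Y : Type*} [Fintype Y] [LinearOrder Y] {p : ℕ → ℝ}
    (hp : IsProbDistNat p) {Q : Y → ℝ} (hQ : IsProbDist Q) (y₀ : Y) :
    IsProbDist (bestDist p Q y₀) :=
  ⟨fun y => bestDist_nonneg hp hQ y₀ y, bestDist_sum hp hQ y₀⟩

lemma pgf_pos {p : ℕ → ℝ} (hp : IsProbDistNat p) {c : ℝ} (hc0 : 0 < c) (hc1 : c ≤ 1) :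
    0 < pgf p c := by
  have hs := probnat_summable hp
  obtain ⟨k₀, hk₀⟩ : ∃ k, p k ≠ 0 := by
    by_contra hall
    push_neg at hall
    have := hp.2
    simp [hall] at this
  have hk₀' : 0 < p k₀ := lt_of_le_of_ne (hp.1 k₀) (Ne.symm hk₀)
  have hterm : 0 < p k₀ * c ^ k₀ := mul_pos hk₀' (pow_pos hc0 k₀)
  have hle := Summable.le_tsum (pgf_summable hp.1 hs hc0.le hc1) k₀
    (fun j _ => mul_nonneg (hp.1 j) (pow_nonneg hc0.le j))
  exact hterm.trans_le hle

lemma pgf_le_one {p : ℕ → ℝ} (hp : IsProbDistNat p) {c : ℝ} (hc0 : 0 ≤ c) (hc1 : c ≤ 1) :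
    pgf p c ≤ 1 := by
  have := pgf_mono hp.1 (probnat_summable hp) hc0 hc1 le_rfl
  rwa [pgf_one hp] at this

lemma ratio_isProbDistNat {p : ℕ → ℝ} (hp : IsProbDistNat p) {c : ℝ}
    (hc0 : 0 < c) (hc1 : c ≤ 1) :
    IsProbDistNat (fun k => p k * c ^ k / pgf p c) := by
  have hf := pgf_pos hp hc0 hc1
  constructor
  · intro k
    exact div_nonneg (mul_nonneg (hp.1 k) (pow_nonneg hc0.le k)) hf.le
  · simp_rw [div_eq_mul_inv]
    rw [tsum_mul_right]
    exact mul_inv_cancel₀ hf.ne'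

/-- The key pointwise inequality. -/
lemma key_ineq {Y : Type*} [Fintype Y] [LinearOrder Y] {δ₀ : ℝ}
    (hδ₀ : δ₀ ∈ Set.Ico (0 : ℝ) 1) {Q Q₁ Q₂ : Y → ℝ}
    (hQ : IsProbDist Q) (hQ₁ : IsProbDist Q₁) (hQ₂ : IsProbDist Q₂)
    (hmix : ∀ y, Q y = (1 - δ₀) * Q₁ y + δ₀ * Q₂ y)
    {p : ℕ → ℝ} (hp : IsProbDistNat p) (y₀ y : Y) :
    pgf p (1 - δ₀) * bestDist (fun k => p k * (1 - δ₀) ^ k / pgf p (1 - δ₀)) Q₁ y₀ y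
      ≤ bestDist p Q y₀ y := by
  obtain ⟨hδl, hδu⟩ := hδ₀
  have hc0 : (0:ℝ) < 1 - δ₀ := by linarith
  have hc1 : (1:ℝ) - δ₀ ≤ 1 := by linarith
  have hf := pgf_pos hp hc0 hc1
  have hs := probnat_summable hp
  set c := 1 - δ₀ with hc
  -- notation
  set L₁ := cdfLE Q₁ y with hL₁
  set L₁m := cdfLT Q₁ y with hL₁m
  set L₂ := cdfLE Q₂ y with hL₂
  set L₂m := cdfLT Q₂ y with hL₂m
  have hmLE := (cdf_mix hmix y).1
  have hmLT := (cdf_mix hmix y).2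
  have h10 : 0 ≤ L₁m := cdfLT_nonneg hQ₁.1 y
  have h11 : L₁m ≤ L₁ := cdfLT_le_cdfLE hQ₁.1 y
  have h20 : 0 ≤ L₂m := cdfLT_nonneg hQ₂.1 y
  have h21 : L₂m ≤ L₂ := cdfLT_le_cdfLE hQ₂.1 y
  have hQle1 : cdfLE Q y ≤ 1 := by rw [← hQ.2]; exact cdfLE_le_sum hQ.1 y
  -- expand LHS
  unfold bestDist
  rw [pgf_ratio p c L₁, pgf_ratio p c L₁m]
  rw [mul_add, mul_sub, mul_div_cancel₀ _ hf.ne', mul_div_cancel₀ _ hf.ne']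
  have hterm : pgf p c * (p 0 * c ^ 0 / pgf p c * (if y = y₀ then 1 else 0))
      = p 0 * (if y = y₀ then 1 else 0) := by
    field_simp
  rw [hterm]
  -- main inequality
  have step1 : pgf p (c * L₁) - pgf p (c * L₁m)
      ≤ pgf p (cdfLT Q y + c * (L₁ - L₁m)) - pgf p (cdfLT Q y) := by
    have := pgf_incr hp.1 hs (a' := c * L₁m) (a := cdfLT Q y) (h := c * (L₁ - L₁m))
      (mul_nonneg hc0.le h10)
      (by rw [hmLT]; nlinarith)
      (mul_nonneg hc0.le (by linarith))
      (by rw [hmLT]; nlinarith [hQle1, hmLE])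
    have he : c * L₁m + c * (L₁ - L₁m) = c * L₁ := by ring
    rwa [he] at this
  have step2 : pgf p (cdfLT Q y + c * (L₁ - L₁m)) ≤ pgf p (cdfLE Q y) := by
    apply pgf_mono hp.1 hs
    · have := cdfLT_nonneg hQ.1 y
      nlinarith
    · rw [hmLT, hmLE]; nlinarith
    · exact hQle1
  linarith

/-- Lemma 22: if `Q = (1-δ₀)Q₁ + δ₀Q₂` and `Q' = (1-δ₀)Q₁' + δ₀Q₂'`,
`K` has pgf `f`, and `K'` has pmf `P[K'=k] = P[K=k](1-δ₀)^k / f(1-δ₀)`, then for all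
`lam ≥ 1`, the `δ`-approximate Rényi divergence with `δ = 1 - f(1-δ₀)` satisfies
`D_lam^δ(A_Q^K ‖ A_{Q'}^K) ≤ D_lam(A_{Q₁}^{K'} ‖ A_{Q₁'}^{K'})`; i.e. there are
decompositions `A_Q^K = (1-δ) P₁ + δ P₂` and `A_{Q'}^K = (1-δ) R₁ + δ R₂` with
`D_lam(P₁‖R₁) ≤ D_lam(A_{Q₁}^{K'} ‖ A_{Q₁'}^{K'})`. -/
theorem approx_renyi_repetition {Y : Type*} [Fintype Y] [LinearOrder Y]
    (δ₀ : ℝ) (hδ₀ : δ₀ ∈ Set.Ico (0 : ℝ) 1)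
    (Q Q' Q₁ Q₂ Q₁' Q₂' : Y → ℝ)
    (hQ : IsProbDist Q) (hQ' : IsProbDist Q')
    (hQ₁ : IsProbDist Q₁) (hQ₂ : IsProbDist Q₂)
    (hQ₁' : IsProbDist Q₁') (hQ₂' : IsProbDist Q₂')
    (hmix : ∀ y, Q y = (1 - δ₀) * Q₁ y + δ₀ * Q₂ y)
    (hmix' : ∀ y, Q' y = (1 - δ₀) * Q₁' y + δ₀ * Q₂' y)
    (p : ℕ → ℝ) (hp : IsProbDistNat p) (y₀ : Y)
    (lam : ℝ) (hlam : 1 ≤ lam) :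
    ∃ P₁ P₂ R₁ R₂ : Y → ℝ,
      IsProbDist P₁ ∧ IsProbDist P₂ ∧ IsProbDist R₁ ∧ IsProbDist R₂ ∧
      (∀ y, bestDist p Q y₀ y =
        pgf p (1 - δ₀) * P₁ y + (1 - pgf p (1 - δ₀)) * P₂ y) ∧
      (∀ y, bestDist p Q' y₀ y =
        pgf p (1 - δ₀) * R₁ y + (1 - pgf p (1 - δ₀)) * R₂ y) ∧
      renyiDiv lam P₁ R₁ ≤
        renyiDiv lam
          (bestDist (fun k => p k * (1 - δ₀) ^ k / pgf p (1 - δ₀)) Q₁ y₀)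
          (bestDist (fun k => p k * (1 - δ₀) ^ k / pgf p (1 - δ₀)) Q₁' y₀) := by
  
  obtain ⟨hδl, hδu⟩ := hδ₀
  have hc0 : (0:ℝ) < 1 - δ₀ := by linarith
  have hc1 : (1:ℝ) - δ₀ ≤ 1 := by linarith
  have hf := pgf_pos hp hc0 hc1
  have hf1 := pgf_le_one hp hc0.le hc1
  set f₀ := pgf p (1 - δ₀) with hf₀
  set p' : ℕ → ℝ := fun k => p k * (1 - δ₀) ^ k / pgf p (1 - δ₀) with hp'def
  have hp' : IsProbDistNat p' := ratio_isProbDistNat hp hc0 hc1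
  set P₁ := bestDist p' Q₁ y₀ with hP₁
  set R₁ := bestDist p' Q₁' y₀ with hR₁
  have hP₁d : IsProbDist P₁ := bestDist_isProbDist hp' hQ₁ y₀
  have hR₁d : IsProbDist R₁ := bestDist_isProbDist hp' hQ₁' y₀
  have hkey : ∀ y, f₀ * P₁ y ≤ bestDist p Q y₀ y :=
    key_ineq ⟨hδl, hδu⟩ hQ hQ₁ hQ₂ hmix hp y₀
  have hkey' : ∀ y, f₀ * R₁ y ≤ bestDist p Q' y₀ y :=
    key_ineq ⟨hδl, hδu⟩ hQ' hQ₁' hQ₂' hmix' hp y₀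
  have hsumQ : ∑ y, bestDist p Q y₀ y = 1 := bestDist_sum hp hQ y₀
  have hsumQ' : ∑ y, bestDist p Q' y₀ y = 1 := bestDist_sum hp hQ' y₀
  have hDsum : ∑ y, (bestDist p Q y₀ y - f₀ * P₁ y) = 1 - f₀ := by
    rw [Finset.sum_sub_distrib, hsumQ, ← Finset.mul_sum, hP₁d.2, mul_one]
  have hEsum : ∑ y, (bestDist p Q' y₀ y - f₀ * R₁ y) = 1 - f₀ := by
    rw [Finset.sum_sub_distrib, hsumQ', ← Finset.mul_sum, hR₁d.2, mul_one]
  by_cases hone : f₀ = 1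
  · -- δ = 0 case: the remainders vanish pointwise
    have hD0 : ∀ y ∈ Finset.univ, bestDist p Q y₀ y - f₀ * P₁ y = 0 := by
      rw [← Finset.sum_eq_zero_iff_of_nonneg
        (fun y _ => sub_nonneg.mpr (hkey y))]
      rw [hDsum, hone, sub_self]
    have hE0 : ∀ y ∈ Finset.univ, bestDist p Q' y₀ y - f₀ * R₁ y = 0 := by
      rw [← Finset.sum_eq_zero_iff_of_nonneg
        (fun y _ => sub_nonneg.mpr (hkey' y))]
      rw [hEsum, hone, sub_self]
    refine ⟨P₁, Q₂, R₁, Q₂', hP₁d, hQ₂, hR₁d, hQ₂', ?_, ?_, le_rfl⟩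
    · intro y
      have h := hD0 y (Finset.mem_univ y)
      rw [hone] at h ⊢
      linarith
    · intro y
      have h := hE0 y (Finset.mem_univ y)
      rw [hone] at h ⊢
      linarith
  · have hlt : f₀ < 1 := lt_of_le_of_ne hf1 hone
    have hpos : 0 < 1 - f₀ := by linarith
    refine ⟨P₁, fun y => (bestDist p Q y₀ y - f₀ * P₁ y) / (1 - f₀),
      R₁, fun y => (bestDist p Q' y₀ y - f₀ * R₁ y) / (1 - f₀),
      hP₁d, ?_, hR₁d, ?_, ?_, ?_, le_rfl⟩
    · constructor
      · intro y
        exact div_nonneg (sub_nonneg.mpr (hkey y)) hpos.le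
      · rw [← Finset.sum_div, hDsum, div_self hpos.ne']
    · constructor
      · intro y
        exact div_nonneg (sub_nonneg.mpr (hkey' y)) hpos.le
      · rw [← Finset.sum_div, hEsum, div_self hpos.ne']
    · intro y
      field_simp
      ring
    · intro y
      field_simp
      ring
end

section
/- Let K be a random variable on ℕ∪{0} with finite mean E[K] > 0 and probability generating function f, and fix m ∈ ℕ with E[K·1{K ≤ m}] > 0. Let K̃ be K conditioned on K ≤ m, with probability generating function f̃. Then for all x ∈ (0,1]: 1 ≤ f'(x)/( f̃'(x)·P[K ≤ m] ) ≤ 1 + x·E[K·1{K>m}]/( E[K] − E[K·1{K>m}] ). -/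
open scoped BigOperators
open Finset

/-! Splitting `f'(x) = ∑ k pₖ x^(k-1)` at `m`, the denominator `f̃'(x) P[K ≤ m]` is exactly the
head `A = ∑_{k ≤ m} k pₖ x^(k-1)`, so the ratio is `1 + B / A` with `B ≥ 0` the tail. For
`0 < x ≤ 1` the powers `x^k` decrease in `k`, so `B ≤ x^m E[K 1{K > m}]` while
`x A ≥ x^m E[K 1{K ≤ m}] = x^m (E[K] - E[K 1{K > m}])`; dividing gives the upper bound. -/

section TsumSplit

variable {α : Type*}

theorem tsum_ite_le_eq_sum_range [AddCommMonoid α] [TopologicalSpace α] (f : ℕ → α) (m : ℕ) :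
    ∑' k, (if k ≤ m then f k else 0) = ∑ k ∈ range (m + 1), f k := by
  rw [tsum_eq_sum (s := range (m + 1)) fun k hk => if_neg (by simpa using hk)]
  exact sum_congr rfl fun k hk => if_pos (Nat.lt_succ_iff.mp (mem_range.mp hk))

theorem Summable.tsum_eq_sum_range_add_tsum_ite [AddCommGroup α] [TopologicalSpace α]
    [IsTopologicalAddGroup α] [T2Space α] {f : ℕ → α} (hf : Summable f) (m : ℕ) :
    ∑' k, f k = ∑ k ∈ range (m + 1), f k + ∑' k, if m < k then f k else 0 := by
  have hcompl : ((range (m + 1) : Set ℕ)ᶜ) = {k | m < k} := by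
    ext k; simp
  rw [← hf.sum_add_tsum_compl (s := range (m + 1)), hcompl, tsum_subtype {k | m < k} f]
  simp only [Set.indicator_apply, Set.mem_ofPred_eq]

theorem Summable.ite_lt [AddCommGroup α] [UniformSpace α] [IsUniformAddGroup α]
    [CompleteSpace α] {f : ℕ → α} (hf : Summable f) (m : ℕ) :
    Summable fun k => if m < k then f k else 0 := by
  convert hf.indicator {k | m < k} using 2 with k
  simp only [Set.indicator_apply, Set.mem_ofPred_eq]

end TsumSplit

theorem pgfDeriv_truncate_div (p : ℕ → ℝ) (m : ℕ) (S x : ℝ) :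
    pgfDeriv (fun k => if k ≤ m then p k / S else 0) x =
      (∑ k ∈ range (m + 1), (k : ℝ) * p k * x ^ (k - 1)) / S := by
  rw [pgfDeriv, ← tsum_ite_le_eq_sum_range, ← tsum_div_const]
  congr 1 with k
  split_ifs <;> ring

section PgfDerivBounds

variable {p : ℕ → ℝ} {x : ℝ}

theorem summable_pgfDeriv_terms (hp : ∀ k, 0 ≤ p k)
    (hmean : Summable fun k : ℕ => (k : ℝ) * p k) (hx0 : 0 ≤ x) (hx1 : x ≤ 1) :
    Summable fun k : ℕ => (k : ℝ) * p k * x ^ (k - 1) :=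
  hmean.of_nonneg_of_le (fun k => by have := hp k; positivity)
    fun k => mul_le_of_le_one_right (by have := hp k; positivity) (pow_le_one₀ hx0 hx1)

theorem pgfDeriv_tail_le_pow_mul_mean_tail (hp : ∀ k, 0 ≤ p k)
    (hmean : Summable fun k : ℕ => (k : ℝ) * p k) (hx0 : 0 ≤ x) (hx1 : x ≤ 1) (m : ℕ) :
    ∑' k : ℕ, (if m < k then (k : ℝ) * p k * x ^ (k - 1) else 0) ≤
      x ^ m * ∑' k : ℕ, if m < k then (k : ℝ) * p k else 0 := by
  have hle : ∀ k : ℕ, (if m < k then (k : ℝ) * p k * x ^ (k - 1) else 0) ≤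
      x ^ m * if m < k then (k : ℝ) * p k else 0 := by
    intro k
    split_ifs with hk
    · rw [mul_comm (x ^ m)]
      exact mul_le_mul_of_nonneg_left (pow_le_pow_of_le_one hx0 hx1 (by omega : m ≤ k - 1))
        (by have := hp k; positivity)
    · simp
  rw [← tsum_mul_left]
  exact Summable.tsum_le_tsum hle ((summable_pgfDeriv_terms hp hmean hx0 hx1).ite_lt m)
    ((hmean.ite_lt m).mul_left _)

theorem pow_mul_mean_head_le_mul_pgfDeriv_head (hp : ∀ k, 0 ≤ p k) (hx0 : 0 ≤ x)
    (hx1 : x ≤ 1) (m : ℕ) :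
    x ^ m * ∑ k ∈ range (m + 1), (k : ℝ) * p k ≤
      x * ∑ k ∈ range (m + 1), (k : ℝ) * p k * x ^ (k - 1) := by
  rw [mul_sum, mul_sum]
  refine sum_le_sum fun k hk => ?_
  rcases k with _ | k
  · simp
  · have hkm : k + 1 ≤ m := Nat.lt_succ_iff.mp (mem_range.mp hk)
    have := hp (k + 1)
    calc x ^ m * ((k + 1 : ℕ) * p (k + 1)) ≤ x ^ (k + 1) * ((k + 1 : ℕ) * p (k + 1)) :=
          mul_le_mul_of_nonneg_right (pow_le_pow_of_le_one hx0 hx1 hkm) (by positivity)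
      _ = x * ((k + 1 : ℕ) * p (k + 1) * x ^ (k + 1 - 1)) := by
          rw [Nat.add_sub_cancel]; ring

theorem sum_range_pos_of_mean_head_pos (hp : ∀ k, 0 ≤ p k) {m : ℕ}
    (h : 0 < ∑ k ∈ range (m + 1), (k : ℝ) * p k) : 0 < ∑ k ∈ range (m + 1), p k := by
  have hle : ∑ k ∈ range (m + 1), (k : ℝ) * p k ≤ m * ∑ k ∈ range (m + 1), p k := by
    rw [mul_sum]
    exact sum_le_sum fun k hk => mul_le_mul_of_nonneg_right
      (by exact_mod_cast Nat.lt_succ_iff.mp (mem_range.mp hk)) (hp k)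
  exact pos_of_mul_pos_right (h.trans_le hle) m.cast_nonneg

end PgfDerivBounds

theorem truncated_pgf_deriv_ratio_general
    (p : ℕ → ℝ) (hp : IsProbDistNat p)
    (hmean : Summable (fun k : ℕ => (k : ℝ) * p k))
    (m : ℕ)
    (hpos : 0 < ∑' k : ℕ, (if k ≤ m then (k : ℝ) * p k else 0))
    (x : ℝ) (hx : x ∈ Set.Ioc (0 : ℝ) 1) :
    1 ≤ pgfDeriv p x /
        (pgfDeriv (fun k => if k ≤ m then p k / ∑ j ∈ Finset.range (m + 1), p j else 0) x *
          ∑ j ∈ Finset.range (m + 1), p j) ∧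
    pgfDeriv p x /
        (pgfDeriv (fun k => if k ≤ m then p k / ∑ j ∈ Finset.range (m + 1), p j else 0) x *
          ∑ j ∈ Finset.range (m + 1), p j) ≤
      1 + x * (∑' k : ℕ, if m < k then (k : ℝ) * p k else 0) /
        ((∑' k : ℕ, (k : ℝ) * p k) - ∑' k : ℕ, if m < k then (k : ℝ) * p k else 0) := by
  obtain ⟨hp0, -⟩ := hp
  obtain ⟨hx0, hx1⟩ := hx
  rw [tsum_ite_le_eq_sum_range] at hpos
  set A1 := ∑ k ∈ range (m + 1), (k : ℝ) * p k
  set A := ∑ k ∈ range (m + 1), (k : ℝ) * p k * x ^ (k - 1)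
  set B := ∑' k : ℕ, if m < k then (k : ℝ) * p k * x ^ (k - 1) else 0
  set T := ∑' k : ℕ, if m < k then (k : ℝ) * p k else 0
  have hB0 : 0 ≤ B := tsum_nonneg fun k => by have := hp0 k; split_ifs <;> positivity
  have hT0 : 0 ≤ T := tsum_nonneg fun k => by have := hp0 k; split_ifs <;> positivity
  have hBT : B ≤ x ^ m * T := pgfDeriv_tail_le_pow_mul_mean_tail hp0 hmean hx0.le hx1 m
  have hA : x ^ m * A1 ≤ x * A := pow_mul_mean_head_le_mul_pgfDeriv_head hp0 hx0.le hx1 m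
  have hApos : 0 < A := pos_of_mul_pos_right ((by positivity : 0 < x ^ m * A1).trans_le hA) hx0.le
  rw [pgfDeriv_truncate_div, div_mul_cancel₀ _ (sum_range_pos_of_mean_head_pos hp0 hpos).ne',
    pgfDeriv, (summable_pgfDeriv_terms hp0 hmean hx0.le hx1).tsum_eq_sum_range_add_tsum_ite m,
    hmean.tsum_eq_sum_range_add_tsum_ite m, add_sub_cancel_right, add_div, div_self hApos.ne']
  refine ⟨le_add_of_nonneg_right (div_nonneg hB0 hApos.le), ?_⟩
  rw [add_le_add_iff_left, div_le_div_iff₀ hApos hpos]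
  calc B * A1 ≤ x ^ m * T * A1 := by gcongr
    _ = T * (x ^ m * A1) := by ring
    _ ≤ T * (x * A) := by gcongr
    _ = x * T * A := by ring

/-- pgf comparison for the truncated count: if `K` has finite positive
mean, `K̃` is `K` conditioned on `K ≤ m` (with `E[K·1{K≤m}] > 0`), and `f, f̃` are their
pgfs, then for all `x ∈ (0,1]`:
`1 ≤ f'(x)/(f̃'(x)·P[K≤m]) ≤ 1 + x·E[K·1{K>m}]/(E[K] - E[K·1{K>m}])`. -/
theorem truncated_pgf_deriv_ratio
    (p : ℕ → ℝ) (hp : IsProbDistNat p)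
    (hmean : Summable (fun k : ℕ => (k : ℝ) * p k))
    (hmeanpos : 0 < ∑' k : ℕ, (k : ℝ) * p k)
    (m : ℕ)
    (hpos : 0 < ∑' k : ℕ, (if k ≤ m then (k : ℝ) * p k else 0))
    (x : ℝ) (hx : x ∈ Set.Ioc (0 : ℝ) 1) :
    1 ≤ pgfDeriv p x /
        (pgfDeriv (fun k => if k ≤ m then p k / ∑ j ∈ Finset.range (m + 1), p j else 0) x *
          ∑ j ∈ Finset.range (m + 1), p j) ∧
    pgfDeriv p x /
        (pgfDeriv (fun k => if k ≤ m then p k / ∑ j ∈ Finset.range (m + 1), p j else 0) x *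
          ∑ j ∈ Finset.range (m + 1), p j) ≤
      1 + x * (∑' k : ℕ, if m < k then (k : ℝ) * p k else 0) /
        ((∑' k : ℕ, (k : ℝ) * p k) - ∑' k : ℕ, if m < k then (k : ℝ) * p k else 0) :=
  truncated_pgf_deriv_ratio_general p hp hmean m hpos x hx
end

section
/- Let η ∈ (−1,∞), γ ∈ (0,1), and let K be drawn from the truncated negative binomial distribution with parameters η, γ, with probability generating function f. Then for all x ∈ [0,1]: f'(x) = (1−(1−γ)x)^{−η−1} · γ^{η+1} · E[K]. -/
open scoped BigOperators
open Finset

/-- The truncated negative binomial distribution `D_{η,γ}` on `ℕ = {1,2,...}`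
(Definition 2 of the paper), with `η ∈ (-1,∞)` and `γ ∈ (0,1)`. -/
noncomputable def tnb (η γ : ℝ) (k : ℕ) : ℝ :=
  if k = 0 then 0
  else if η = 0 then (1 - γ) ^ k / ((k : ℝ) * Real.log (1 / γ))
  else ((1 - γ) ^ k / (γ ^ (-η) - 1)) * ∏ l ∈ Finset.range k, (((l : ℝ) + η) / ((l : ℝ) + 1))

/-- The mean `E[K]` of the truncated negative binomial distribution `D_{η,γ}`. -/
noncomputable def tnbMean (η γ : ℝ) : ℝ :=
  if η = 0 then (1 / γ - 1) / Real.log (1 / γ)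
  else η * (1 - γ) / (γ * (1 - γ ^ η))


/-- Coefficients of the binomial series for `(1-t)^{-(η+1)}`. -/
noncomputable def tnbC (η : ℝ) (k : ℕ) : ℝ :=
  ∏ l ∈ Finset.range k, (((l : ℝ) + η + 1) / ((l : ℝ) + 1))

lemma tnbC_zero (η : ℝ) : tnbC η 0 = 1 := by simp [tnbC]

lemma tnbC_succ (η : ℝ) (k : ℕ) :
    tnbC η (k + 1) = tnbC η k * (((k : ℝ) + η + 1) / ((k : ℝ) + 1)) :=
  Finset.prod_range_succ _ _

lemma tnbC_nonneg {η : ℝ} (hη : -1 < η) (k : ℕ) : 0 ≤ tnbC η k := by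
  refine Finset.prod_nonneg fun l _ => div_nonneg ?_ (by positivity)
  have : (0:ℝ) ≤ (l:ℝ) := Nat.cast_nonneg l
  linarith

lemma prod_eq_choose (m k : ℕ) :
    ∏ l ∈ Finset.range k, (((l : ℝ) + (m : ℝ) + 1) / ((l : ℝ) + 1))
      = (Nat.choose (k + m) m : ℝ) := by
  induction k with
  | zero => simp
  | succ k ih =>
    rw [Finset.prod_range_succ, ih]
    have hnat : (k + m + 1) * Nat.choose (k + m) m = Nat.choose (k + 1 + m) m * (k + 1) := by
      have h1 : (k + m).choose k = (k + m).choose m := Nat.choose_symm_add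
      have h2 : (k + m + 1).choose (k + 1) = (k + 1 + m).choose m := by
        have : (k + 1 + m).choose (k + 1) = (k + 1 + m).choose m := Nat.choose_symm_add
        rw [← this]; ring_nf
      have h3 := Nat.add_one_mul_choose_eq (k + m) k
      rw [h1, h2] at h3
      simpa [Nat.succ_eq_add_one, mul_comm] using h3
    have hk1 : ((k:ℝ) + 1) ≠ 0 := by positivity
    field_simp
    have := congrArg (fun n : ℕ => (n : ℝ)) hnat
    push_cast at this ⊢
    linarith [this]

lemma tnbC_le_pow {η : ℝ} (hη : -1 < η) (k : ℕ) :
    tnbC η k ≤ (((k : ℝ) + (⌈η⌉₊ : ℝ))) ^ (⌈η⌉₊ : ℕ) := by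
  set m := ⌈η⌉₊
  have h1 : tnbC η k ≤ ∏ l ∈ Finset.range k, (((l : ℝ) + (m : ℝ) + 1) / ((l : ℝ) + 1)) := by
    refine Finset.prod_le_prod (fun l _ => div_nonneg ?_ (by positivity))
      (fun l _ => div_le_div_of_nonneg_right ?_ (by positivity))
    · have : (0:ℝ) ≤ (l:ℝ) := Nat.cast_nonneg l; linarith
    · have := Nat.le_ceil η; linarith
  calc tnbC η k ≤ _ := h1
    _ = ((k + m).choose m : ℝ) := prod_eq_choose m k
    _ ≤ ((k + m : ℕ) : ℝ) ^ m := by exact_mod_cast Nat.choose_le_pow (k+m) m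
    _ = ((k:ℝ) + (m:ℝ)) ^ m := by push_cast; ring

/-- polynomial times geometric, shifted, is summable -/
lemma summable_shifted_poly_geom (p m : ℕ) {r : ℝ} (hr0 : 0 < r) (hr1 : r < 1) :
    Summable fun k : ℕ => ((k : ℝ) + (m : ℝ)) ^ p * r ^ k := by
  have h : Summable fun n : ℕ => (n : ℝ) ^ p * r ^ n :=
    summable_pow_mul_geometric_of_norm_lt_one p
      (by rwa [Real.norm_eq_abs, abs_of_pos hr0])
  have h2 : Summable fun k : ℕ => ((k + m : ℕ) : ℝ) ^ p * r ^ (k + m) :=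
    h.comp_injective (add_left_injective m)
  have h3 := h2.mul_right ((r ^ m)⁻¹)
  refine h3.congr fun k => ?_
  push_cast
  rw [pow_add]
  field_simp

lemma summable_tnbC {η : ℝ} (hη : -1 < η) {y : ℝ} (hy : |y| < 1) :
    Summable fun k => tnbC η k * y ^ k := by
  set m := ⌈η⌉₊ with hm
  set r := (1 + |y|) / 2 with hr
  have hy0 : (0:ℝ) ≤ |y| := abs_nonneg y
  have hr0 : 0 < r := by rw [hr]; positivity
  have hr1 : r < 1 := by rw [hr]; linarith
  have hyr : |y| ≤ r := by rw [hr]; linarith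
  refine Summable.of_norm_bounded (summable_shifted_poly_geom m m hr0 hr1) fun k => ?_
  rw [Real.norm_eq_abs, abs_mul, abs_pow, abs_of_nonneg (tnbC_nonneg hη k)]
  have h1 : tnbC η k ≤ ((k:ℝ) + m) ^ m := tnbC_le_pow hη k
  have h2 : |y| ^ k ≤ r ^ k := pow_le_pow_left₀ hy0 hyr k
  have h3 : (0:ℝ) ≤ ((k:ℝ) + m) ^ m := by positivity
  calc tnbC η k * |y| ^ k ≤ ((k:ℝ) + m) ^ m * r ^ k := by
        exact mul_le_mul h1 h2 (by positivity) h3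
    _ = _ := rfl

lemma summable_u (m : ℕ) {r : ℝ} (hr0 : 0 < r) (hr1 : r < 1) :
    Summable fun k : ℕ => ((k:ℝ) + m) ^ (m + 1) * r ^ (k - 1) := by
  refine Summable.of_nonneg_of_le (fun k => by positivity) (fun k => ?_)
    ((summable_shifted_poly_geom (m + 1) m hr0 hr1).mul_left r⁻¹)
  have hrinv : (1:ℝ) ≤ r⁻¹ := one_le_inv_iff₀.mpr ⟨hr0, hr1.le⟩
  cases k with
  | zero =>
      simp only [Nat.zero_sub, pow_zero, mul_one, Nat.cast_zero, zero_add]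
      nlinarith [pow_nonneg (by positivity : (0:ℝ) ≤ (m:ℝ)) (m+1)]
  | succ k =>
      have h : (k + 1 - 1 : ℕ) = k := rfl
      rw [h]
      have hne : r ≠ 0 := ne_of_gt hr0
      push_cast
      have h2 : r⁻¹ * (((k:ℝ) + 1 + m) ^ (m + 1) * r ^ (k + 1))
          = ((k:ℝ) + 1 + m) ^ (m + 1) * r ^ k := by
        rw [pow_succ (a := r)]; field_simp
      rw [h2]

lemma tnbC_deriv_bound {η : ℝ} (hη : -1 < η) {z r : ℝ} (hz : |z| ≤ r) (k : ℕ) :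
    ‖tnbC η k * ((k:ℝ) * z ^ (k - 1))‖ ≤ ((k:ℝ) + ⌈η⌉₊) ^ (⌈η⌉₊ + 1) * r ^ (k - 1) := by
  set m := ⌈η⌉₊
  have hr0 : (0:ℝ) ≤ r := le_trans (abs_nonneg z) hz
  rw [Real.norm_eq_abs, abs_mul, abs_of_nonneg (tnbC_nonneg hη k), abs_mul, abs_pow,
    Nat.abs_cast]
  have h1 : tnbC η k ≤ ((k:ℝ) + m) ^ m := tnbC_le_pow hη k
  have h2 : |z| ^ (k - 1) ≤ r ^ (k - 1) := pow_le_pow_left₀ (abs_nonneg z) hz _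
  have h3 : (k:ℝ) ≤ (k:ℝ) + m := by
    have : (0:ℝ) ≤ (m:ℝ) := Nat.cast_nonneg m
    linarith
  calc tnbC η k * ((k:ℝ) * |z| ^ (k - 1))
      ≤ ((k:ℝ) + m) ^ m * (((k:ℝ) + m) * r ^ (k - 1)) := by
        refine mul_le_mul h1 ?_ (by positivity) (by positivity)
        exact mul_le_mul h3 h2 (by positivity) (by positivity)
    _ = ((k:ℝ) + m) ^ (m + 1) * r ^ (k - 1) := by rw [pow_succ]; ring

lemma summable_tnbC_deriv {η : ℝ} (hη : -1 < η) {y : ℝ} (hy : |y| < 1) :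
    Summable fun k => tnbC η k * ((k:ℝ) * y ^ (k - 1)) := by
  set r := (1 + |y|) / 2 with hr
  have hy0 : (0:ℝ) ≤ |y| := abs_nonneg y
  have hr0 : 0 < r := by rw [hr]; positivity
  have hr1 : r < 1 := by rw [hr]; linarith
  have hyr : |y| ≤ r := by rw [hr]; linarith
  exact Summable.of_norm_bounded (summable_u ⌈η⌉₊ hr0 hr1)
    (fun k => tnbC_deriv_bound hη hyr k)

noncomputable def tnbS (η y : ℝ) : ℝ := ∑' k, tnbC η k * y ^ k

noncomputable def tnbT (η y : ℝ) : ℝ := ∑' k, tnbC η k * ((k:ℝ) * y ^ (k - 1))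

lemma hasDerivAt_tnbS {η : ℝ} (hη : -1 < η) {y : ℝ} (hy : |y| < 1) :
    HasDerivAt (tnbS η) (tnbT η y) y := by
  set r := (1 + |y|) / 2 with hr
  have hy0 : (0:ℝ) ≤ |y| := abs_nonneg y
  have hr0 : 0 < r := by rw [hr]; positivity
  have hr1 : r < 1 := by rw [hr]; linarith
  have hyr : |y| < r := by rw [hr]; linarith
  have hmem : y ∈ Set.Ioo (-r) r := by
    constructor
    · linarith [neg_abs_le y]
    · linarith [le_abs_self y]
  have hmem0 : (0:ℝ) ∈ Set.Ioo (-r) r := ⟨by linarith, hr0⟩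
  exact hasDerivAt_tsum_of_isPreconnected (summable_u ⌈η⌉₊ hr0 hr1) isOpen_Ioo
    (convex_Ioo _ _).isPreconnected
    (fun k z _ => (hasDerivAt_pow k z).const_mul (tnbC η k))
    (fun k z hz => tnbC_deriv_bound hη (abs_lt.mpr ⟨hz.1, hz.2⟩).le k)
    hmem0 (summable_tnbC hη (by simp [zero_lt_one])) hmem

lemma tnb_ode {η : ℝ} (hη : -1 < η) {y : ℝ} (hy : |y| < 1) :
    (1 - y) * tnbT η y = (η + 1) * tnbS η y := by
  have hs1 : Summable fun k => tnbC η k * ((k:ℝ) * y ^ (k - 1)) := summable_tnbC_deriv hη hy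
  have hshift : Summable fun k => tnbC η (k + 1) * (((k:ℝ) + 1) * y ^ k) := by
    have h := hs1.comp_injective (add_left_injective 1)
    refine h.congr fun k => ?_
    simp only [Function.comp]
    push_cast
    rfl
  have hs2 : Summable fun k => tnbC η k * ((k:ℝ) * y ^ k) := by
    refine (hs1.mul_left y).congr fun k => ?_
    cases k with
    | zero => simp
    | succ k =>
        have h : (k + 1 - 1 : ℕ) = k := rfl
        rw [h]
        push_cast
        rw [pow_succ]
        ring
  have hTs : tnbT η y = ∑' k, tnbC η (k + 1) * (((k:ℝ) + 1) * y ^ k) := by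
    rw [tnbT, Summable.tsum_eq_zero_add hs1]
    simp only [Nat.cast_zero, zero_mul, mul_zero, zero_add]
    refine tsum_congr fun k => ?_
    push_cast
    rfl
  have hyT : y * tnbT η y = ∑' k, tnbC η k * ((k:ℝ) * y ^ k) := by
    rw [tnbT, ← tsum_mul_left]
    refine tsum_congr fun k => ?_
    cases k with
    | zero => simp
    | succ k =>
        have h : (k + 1 - 1 : ℕ) = k := rfl
        rw [h]
        push_cast
        rw [pow_succ]
        ring
  have hsub : tnbT η y - y * tnbT η y = ∑' k, (η + 1) * (tnbC η k * y ^ k) := by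
    rw [hyT, hTs, ← Summable.tsum_sub hshift hs2]
    refine tsum_congr fun k => ?_
    have hk1 : ((k:ℝ) + 1) ≠ 0 := by positivity
    rw [tnbC_succ]
    field_simp
    ring
  have h : (1 - y) * tnbT η y = tnbT η y - y * tnbT η y := by ring
  rw [h, hsub, tsum_mul_left]
  rfl

lemma tnbS_zero (η : ℝ) : tnbS η 0 = 1 := by
  rw [tnbS, tsum_eq_single 0 (fun k hk => by simp [zero_pow hk])]
  simp [tnbC_zero]

/-- The generalized binomial series. -/
lemma tnbS_eq {η : ℝ} (hη : -1 < η) {t : ℝ} (ht0 : 0 ≤ t) (ht1 : t < 1) :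
    tnbS η t = (1 - t) ^ (-(η + 1)) := by
  have hF : ∀ y ∈ Set.Icc (0:ℝ) t,
      HasDerivAt (fun y => tnbS η y * (1 - y) ^ (η + 1)) 0 y := by
    intro y hy
    have hy1 : |y| < 1 := by
      rw [abs_lt]; exact ⟨by linarith [hy.1], by linarith [hy.2]⟩
    have h1y : (0:ℝ) < 1 - y := by
      have := le_abs_self y; linarith [(abs_lt.mp hy1).2]
    have h1 := hasDerivAt_tnbS hη hy1
    have hb : HasDerivAt (fun z : ℝ => 1 - z) (-1) y := (hasDerivAt_id y).const_sub 1
    have ha := (Real.hasDerivAt_rpow_const (x := 1 - y) (p := η + 1)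
      (Or.inl (ne_of_gt h1y))).comp y hb
    have h2 : HasDerivAt (fun z : ℝ => (1 - z) ^ (η + 1))
        (-((η + 1) * (1 - y) ^ η)) y := by
      refine ha.congr_deriv ?_
      have : η + 1 - 1 = η := by ring
      rw [this]; ring
    have h3 := h1.mul h2
    refine h3.congr_deriv (Eq.symm ?_)
    have hode := tnb_ode hη hy1
    have hsplit : (1 - y) ^ (η + 1) = (1 - y) ^ η * (1 - y) := by
      rw [Real.rpow_add h1y, Real.rpow_one]
    rw [hsplit]
    linear_combination (-((1 - y) ^ η)) * hode
  have hc : ContinuousOn (fun y => tnbS η y * (1 - y) ^ (η + 1)) (Set.Icc 0 t) :=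
    fun y hy => (hF y hy).continuousAt.continuousWithinAt
  have hconst := constant_of_has_deriv_right_zero hc
    (fun y hy => (hF y (Set.mem_Icc_of_Ico hy)).hasDerivWithinAt) t
    (Set.right_mem_Icc.mpr ht0)
  simp only [tnbS_zero, sub_zero, Real.one_rpow, mul_one, one_mul] at hconst
  have h1t : (0:ℝ) < 1 - t := by linarith
  have hpos : (0:ℝ) < (1 - t) ^ (η + 1) := Real.rpow_pos_of_pos h1t _
  rw [Real.rpow_neg h1t.le]
  field_simp
  linarith [hconst]

lemma shift_prod (η : ℝ) (k : ℕ) :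
    ((k:ℝ) + 1) * ∏ l ∈ Finset.range (k+1), (((l:ℝ) + η) / ((l:ℝ) + 1)) = η * tnbC η k := by
  induction k with
  | zero => simp [tnbC_zero]
  | succ k ih =>
      rw [Finset.prod_range_succ, tnbC_succ]
      have hk1 : ((k:ℝ) + 1) ≠ 0 := by positivity
      have hk2 : ((k:ℝ) + 1 + 1) ≠ 0 := by positivity
      push_cast at ih ⊢
      generalize hQ : (∏ l ∈ Finset.range (k+1), (((l:ℝ) + η) / ((l:ℝ) + 1))) = Q at ih ⊢
      field_simp
      linear_combination ((k:ℝ) + 1 + η) * ih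

lemma tnbC_eta_zero (k : ℕ) : tnbC 0 k = 1 := by
  rw [tnbC]
  refine Finset.prod_eq_one fun l _ => ?_
  have : ((l:ℝ) + 1) ≠ 0 := by positivity
  field_simp
  ring

lemma pgfDeriv_eq_of {η γ x : ℝ} (C : ℝ) (hη : -1 < η) (habs : |(1 - γ) * x| < 1)
    (h : ∀ k : ℕ, ((k:ℝ) + 1) * tnb η γ (k + 1) * x ^ k
        = C * (tnbC η k * ((1 - γ) * x) ^ k)) :
    pgfDeriv (tnb η γ) x = C * tnbS η ((1 - γ) * x) := by
  set f : ℕ → ℝ := fun k => (k : ℝ) * tnb η γ k * x ^ (k - 1) with hf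
  have hfs : ∀ k : ℕ, f (k + 1) = C * (tnbC η k * ((1 - γ) * x) ^ k) := by
    intro k
    rw [hf]
    simp only
    have h1 : (k + 1 - 1 : ℕ) = k := rfl
    rw [h1]
    push_cast
    exact h k
  have hs : Summable fun k => f (k + 1) :=
    ((summable_tnbC hη habs).mul_left C).congr fun k => (hfs k).symm
  have hsf : Summable f := (summable_nat_add_iff 1).mp hs
  rw [pgfDeriv]
  have : (∑' k : ℕ, (k : ℝ) * tnb η γ k * x ^ (k - 1)) = ∑' k, f k := rfl
  rw [this, Summable.tsum_eq_zero_add hsf]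
  have h0 : f 0 = 0 := by simp [hf]
  rw [h0, zero_add, tsum_congr hfs, tsum_mul_left, tnbS]

/-- the derivative of the pgf of the truncated negative binomial
distribution satisfies `f'(x) = (1-(1-γ)x)^(-η-1) · γ^(η+1) · E[K]` for `x ∈ [0,1]`. -/
theorem tnb_pgf_deriv (η γ : ℝ) (hη : -1 < η) (hγ : γ ∈ Set.Ioo (0 : ℝ) 1)
    (x : ℝ) (hx : x ∈ Set.Icc (0 : ℝ) 1) :
    pgfDeriv (tnb η γ) x =
      (1 - (1 - γ) * x) ^ (-η - 1) * γ ^ (η + 1) * tnbMean η γ := by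
  obtain ⟨hγ0, hγ1⟩ := hγ
  obtain ⟨hx0, hx1⟩ := hx
  have ht00 : 0 ≤ (1 - γ) * x := mul_nonneg (by linarith) hx0
  have htlt : (1 - γ) * x < 1 := by nlinarith
  have habs : |(1 - γ) * x| < 1 := by rw [abs_of_nonneg ht00]; exact htlt
  have h1t : 0 < 1 - (1 - γ) * x := by linarith
  have hexp : -η - 1 = -(η + 1) := by ring
  have key : ∀ z : ℝ, z ≠ 0 → γ ^ z ≠ 1 := by
    intro z hz
    rcases lt_or_gt_of_ne hz with h | h
    · exact ne_of_gt ((Real.one_lt_rpow_iff_of_pos hγ0).mpr (Or.inr ⟨hγ1, h⟩))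
    · exact ne_of_lt (Real.rpow_lt_one hγ0.le hγ1 h)
  by_cases hη0 : η = 0
  · subst hη0
    have hlog : Real.log (1 / γ) ≠ 0 := by
      refine ne_of_gt (Real.log_pos ?_)
      rw [one_div]
      exact (one_lt_inv_iff₀).mpr ⟨hγ0, hγ1⟩
    have hC : ∀ k : ℕ, ((k:ℝ) + 1) * tnb 0 γ (k + 1) * x ^ k
        = ((1 - γ) / Real.log (1 / γ)) * (tnbC 0 k * ((1 - γ) * x) ^ k) := by
      intro k
      rw [tnb, if_neg (Nat.succ_ne_zero k), if_pos rfl, tnbC_eta_zero, mul_pow, pow_succ]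
      have hk1 : ((k:ℝ) + 1) ≠ 0 := by positivity
      push_cast
      field_simp
    rw [pgfDeriv_eq_of _ hη habs hC, tnbS_eq hη ht00 htlt, tnbMean, if_pos rfl, hexp]
    have hγ' : γ ^ ((0:ℝ) + 1) = γ := by rw [zero_add, Real.rpow_one]
    rw [hγ']
    have hγne : γ ≠ 0 := ne_of_gt hγ0
    field_simp
  · have hγη : (0:ℝ) < γ ^ η := Real.rpow_pos_of_pos hγ0 η
    have hrpowneg : γ ^ (-η) = (γ ^ η)⁻¹ := Real.rpow_neg hγ0.le η
    have hrpow1 : γ ^ (η + 1) = γ ^ η * γ := by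
      rw [Real.rpow_add hγ0, Real.rpow_one]
    have hne : (1:ℝ) - γ ^ η ≠ 0 := sub_ne_zero.mpr (Ne.symm (key η hη0))
    have hden : γ ^ (-η) - 1 ≠ 0 := by
      rw [hrpowneg]
      intro h
      have h2 : (γ ^ η)⁻¹ = 1 := by linarith
      exact (key η hη0) (inv_eq_one.mp h2)
    have hC : ∀ k : ℕ, ((k:ℝ) + 1) * tnb η γ (k + 1) * x ^ k
        = (η * (1 - γ) / (γ ^ (-η) - 1)) * (tnbC η k * ((1 - γ) * x) ^ k) := by
      intro k
      rw [tnb, if_neg (Nat.succ_ne_zero k), if_neg hη0]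
      have e : ((k:ℝ) + 1) * ((1 - γ) ^ (k+1) / (γ ^ (-η) - 1)
            * ∏ l ∈ Finset.range (k+1), (((l:ℝ) + η) / ((l:ℝ) + 1))) * x ^ k
          = ((1 - γ) ^ (k+1) * x ^ k / (γ ^ (-η) - 1))
            * (((k:ℝ) + 1) * ∏ l ∈ Finset.range (k+1), (((l:ℝ) + η) / ((l:ℝ) + 1))) := by
        ring
      push_cast
      rw [e, shift_prod, mul_pow, pow_succ]
      ring
    rw [pgfDeriv_eq_of _ hη habs hC, tnbS_eq hη ht00 htlt, tnbMean, if_neg hη0, hexp,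
      hrpowneg, hrpow1]
    have hγne : γ ≠ 0 := ne_of_gt hγ0
    have hγηne : γ ^ η ≠ 0 := ne_of_gt hγη
    have hden' : (γ ^ η)⁻¹ - 1 ≠ 0 := by rw [← hrpowneg]; exact hden
    field_simp
end
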